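/- arXiv:2106.06680 — 4 statements merged into one kernel-verified Lean document; each statement's English description precedes it below -/
import Mathlib

section
/- If a stochastic matrix P on a finite nonempty state space S has all entries strictly positive, then there exists a probability distribution d on S satisfying the stationarity equation d(s') = ∑_{s∈S} d(s)·P(s,s') for all s'. -/
/-- If a stochastic matrix `P` on a finite nonempty state space has all entries strictly
positive, then there exists a stationary probability distribution. -/
theorem stmt_0 {S : Type*} [Fintype S] [Nonempty S] (P : S → S → ℝ)
    (hpos : ∀ s s', 0 < P s s') (hrow : ∀ s, ∑ s', P s s' = 1) :
    ∃ d : S → ℝ, (∀ s, 0 ≤ d s) ∧ (∑ s, d s = 1) ∧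
      (∀ s', d s' = ∑ s, d s * P s s') := by
  classical
  -- 1 is an eigenvalue of the transpose, since the row sums are 1.
  set M : Matrix S S ℝ := Matrix.of P with hM
  have hdet : (M - 1).det = 0 := by
    rw [← Matrix.exists_mulVec_eq_zero_iff]
    refine ⟨fun _ => 1, ?_, ?_⟩
    · intro h
      have := congrFun h (Classical.arbitrary S)
      simp at this
    · funext s
      rw [Matrix.sub_mulVec, Matrix.one_mulVec]
      simp [Matrix.mulVec, dotProduct, hrow s, M]
  have hdetT : (M.transpose - 1).det = 0 := by
    rw [show M.transpose - 1 = (M - 1).transpose by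
      rw [Matrix.transpose_sub, Matrix.transpose_one], Matrix.det_transpose]
    exact hdet
  obtain ⟨v, hv0, hv⟩ := (Matrix.exists_mulVec_eq_zero_iff).2 hdetT
  have hfix : ∀ s', ∑ s, v s * P s s' = v s' := by
    intro s'
    have := congrFun hv s'
    rw [Matrix.sub_mulVec, Matrix.one_mulVec] at this
    simp [Matrix.mulVec, dotProduct, sub_eq_zero, Matrix.transpose_apply, M] at this
    rw [← this]
    exact Finset.sum_congr rfl fun s _ => mul_comm _ _
  -- Equality in the triangle inequality: |v| is also fixed.
  have habs_le : ∀ s', |v s'| ≤ ∑ s, |v s| * P s s' := by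
    intro s'
    rw [← hfix s']
    calc |∑ s, v s * P s s'| ≤ ∑ s, |v s * P s s'| := Finset.abs_sum_le_sum_abs _ _
      _ = ∑ s, |v s| * P s s' := by
        refine Finset.sum_congr rfl fun s _ => ?_
        rw [abs_mul, abs_of_pos (hpos s s')]
  have hsum_eq : ∑ s', ∑ s, |v s| * P s s' = ∑ s', |v s'| := by
    rw [Finset.sum_comm]
    calc ∑ s, ∑ s', |v s| * P s s' = ∑ s, |v s| * ∑ s', P s s' := by
          simp [Finset.mul_sum]
      _ = ∑ s, |v s| := by simp [hrow]
  have habs : ∀ s', |v s'| = ∑ s, |v s| * P s s' := by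
    intro s'
    by_contra h
    have hlt : |v s'| < ∑ s, |v s| * P s s' := lt_of_le_of_ne (habs_le s') h
    have : ∑ t, |v t| < ∑ t, ∑ s, |v s| * P s t :=
      Finset.sum_lt_sum (fun t _ => habs_le t) ⟨s', Finset.mem_univ s', hlt⟩
    rw [hsum_eq] at this
    exact lt_irrefl _ this
  -- Sign constancy: pick any s'; equality |∑ vP| = ∑ |v| P forces all v same sign.
  obtain ⟨s₀⟩ := ‹Nonempty S›
  have key : (∀ s, 0 ≤ v s) ∨ (∀ s, v s ≤ 0) := by
    have heq : |∑ s, v s * P s s₀| = ∑ s, |v s| * P s s₀ := by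
      rw [hfix s₀]; exact habs s₀
    rcases abs_cases (∑ s, v s * P s s₀) with ⟨h1, _⟩ | ⟨h1, _⟩
    · -- sum is nonneg: ∑ (|v s| - v s) P = 0
      left
      have hz : ∑ s, (|v s| - v s) * P s s₀ = 0 := by
        simp only [sub_mul, Finset.sum_sub_distrib]
        rw [← heq, h1, sub_self]
      have := (Finset.sum_eq_zero_iff_of_nonneg (fun s _ =>
        mul_nonneg (by simp [sub_nonneg, le_abs_self]) (hpos s s₀).le)).mp hz
      intro s
      have hs := this s (Finset.mem_univ s)
      have : |v s| - v s = 0 := by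
        rcases mul_eq_zero.mp hs with h | h
        · exact h
        · exact absurd h (hpos s s₀).ne'
      nlinarith [abs_nonneg (v s)]
    · right
      have hz : ∑ s, (|v s| + v s) * P s s₀ = 0 := by
        simp only [add_mul, Finset.sum_add_distrib]
        rw [← heq, h1]; ring
      have := (Finset.sum_eq_zero_iff_of_nonneg (fun s _ =>
        mul_nonneg (by linarith [neg_abs_le (v s)]) (hpos s s₀).le)).mp hz
      intro s
      have hs := this s (Finset.mem_univ s)
      have : |v s| + v s = 0 := by
        rcases mul_eq_zero.mp hs with h | h
        · exact h
        · exact absurd h (hpos s s₀).ne'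
      nlinarith [abs_nonneg (v s)]
  -- Take w the nonnegative version of v.
  obtain ⟨w, hw0, hwfix, hwne⟩ : ∃ w : S → ℝ, (∀ s, 0 ≤ w s) ∧
      (∀ s', ∑ s, w s * P s s' = w s') ∧ w ≠ 0 := by
    rcases key with h | h
    · exact ⟨v, h, hfix, hv0⟩
    · refine ⟨-v, fun s => by simpa using h s, fun s' => ?_, by simpa using hv0⟩
      simp only [Pi.neg_apply]
      rw [← hfix s', ← Finset.sum_neg_distrib]
      exact Finset.sum_congr rfl fun s _ => by ring
  have hone : ∃ s, 0 < w s := by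
    by_contra h
    push_neg at h
    exact hwne (funext fun s => le_antisymm (h s) (hw0 s))
  obtain ⟨s₁, hs₁⟩ := hone
  have hc : 0 < ∑ s, w s :=
    Finset.sum_pos' (fun s _ => hw0 s) ⟨s₁, Finset.mem_univ s₁, hs₁⟩
  set c := ∑ s, w s
  refine ⟨fun s => w s / c, fun s => div_nonneg (hw0 s) hc.le, ?_, ?_⟩
  · rw [← Finset.sum_div, div_self hc.ne']
  · intro s'
    show w s' / c = _
    rw [← hwfix s', Finset.sum_div]
    exact Finset.sum_congr rfl fun s _ => by ring
end

section
/- A stochastic matrix with all entries strictly positive has a unique stationary distribution. -/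
open Finset

/-- Any vector fixed by the positive stochastic matrix has constant sign. -/
lemma sign_lemma {S : Type*} [Fintype S] [Nonempty S] (P : S → S → ℝ)
    (hpos : ∀ s s', 0 < P s s') (hrow : ∀ s, ∑ s', P s s' = 1)
    (v : S → ℝ) (hv : ∀ s', v s' = ∑ s, v s * P s s') :
    (∀ s, 0 ≤ v s) ∨ (∀ s, v s ≤ 0) := by
  by_contra h
  push_neg at h
  obtain ⟨⟨s1, hs1⟩, ⟨s2, hs2⟩⟩ := h
  -- hs1 : v s1 < 0, hs2 : 0 < v s2
  have key : ∀ s', |v s'| < ∑ s, |v s| * P s s' := by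
    intro s'
    rw [hv s', abs_lt]
    constructor
    · have : ∑ s, (-(v s)) * P s s' < ∑ s, |v s| * P s s' := by
        refine Finset.sum_lt_sum (fun s _ => ?_) ⟨s2, Finset.mem_univ _, ?_⟩
        · exact mul_le_mul_of_nonneg_right (neg_le_abs _) (hpos s s').le
        · exact mul_lt_mul_of_pos_right (by rw [abs_of_pos hs2]; linarith) (hpos s2 s')
      have h2 : -∑ s, v s * P s s' = ∑ s, (-(v s)) * P s s' := by
        rw [← Finset.sum_neg_distrib]; simp [neg_mul]
      linarith
    · refine Finset.sum_lt_sum (fun s _ => ?_) ⟨s1, Finset.mem_univ _, ?_⟩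
      · exact mul_le_mul_of_nonneg_right (le_abs_self _) (hpos s s').le
      · exact mul_lt_mul_of_pos_right (by rw [abs_of_neg hs1]; linarith) (hpos s1 s')
  have hsum : ∑ s', |v s'| < ∑ s', ∑ s, |v s| * P s s' :=
    Finset.sum_lt_sum_of_nonempty Finset.univ_nonempty (fun s' _ => key s')
  rw [Finset.sum_comm] at hsum
  simp_rw [← Finset.mul_sum, hrow, mul_one] at hsum
  exact lt_irrefl _ hsum

/-- A stochastic matrix with all entries strictly positive has a unique stationary
distribution. -/
theorem stmt_2 {S : Type*} [Fintype S] [Nonempty S] (P : S → S → ℝ)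
    (hpos : ∀ s s', 0 < P s s') (hrow : ∀ s, ∑ s', P s s' = 1) :
    ∃! d : S → ℝ, (∀ s, 0 ≤ d s) ∧ (∑ s, d s = 1) ∧
      (∀ s', d s' = ∑ s, d s * P s s') := by
  classical
  -- Existence of a nonzero fixed vector via determinants.
  set M : Matrix S S ℝ := Matrix.of P - 1 with hM
  have hMv : M.mulVec (fun _ => 1) = 0 := by
    funext s
    simp [M, Matrix.sub_mulVec, Matrix.mulVec, dotProduct, hrow s,
      Matrix.one_mulVec, Matrix.one_apply]
  have hdet : M.det = 0 := by
    rw [← Matrix.exists_mulVec_eq_zero_iff]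
    exact ⟨fun _ => 1, by simp [funext_iff], hMv⟩
  have hdetT : (M.transpose).det = 0 := by rw [Matrix.det_transpose]; exact hdet
  obtain ⟨w, hw0, hw⟩ := (Matrix.exists_mulVec_eq_zero_iff).mpr hdetT
  have hstat : ∀ s', w s' = ∑ s, w s * P s s' := by
    intro s'
    have := congrFun hw s'
    simp only [Matrix.mulVec, dotProduct, Matrix.transpose_apply, hM,
      Matrix.sub_apply, Matrix.of_apply, Pi.zero_apply, sub_mul,
      Finset.sum_sub_distrib] at this
    have h1 : ∑ s, (1 : Matrix S S ℝ) s s' * w s = w s' := by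
      simp [Matrix.one_apply, Finset.sum_ite_eq]
    rw [h1] at this
    have : ∑ s, P s s' * w s = w s' := by linarith
    rw [← this]
    exact Finset.sum_congr rfl fun s _ => mul_comm _ _
  -- WLOG the fixed vector is nonnegative
  obtain ⟨u, hu0, hustat, hunn⟩ :
      ∃ u : S → ℝ, u ≠ 0 ∧ (∀ s', u s' = ∑ s, u s * P s s') ∧ ∀ s, 0 ≤ u s := by
    rcases sign_lemma P hpos hrow w hstat with hnn | hnp
    · exact ⟨w, hw0, hstat, hnn⟩
    · refine ⟨-w, by simpa using hw0, fun s' => ?_, fun s => by simpa using hnp s⟩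
      simp only [Pi.neg_apply, neg_mul, Finset.sum_neg_distrib]
      rw [hstat s']
  set c : ℝ := ∑ s, u s with hc
  have hcpos : 0 < c := by
    rcases (Finset.sum_nonneg (fun s _ => hunn s)).lt_or_eq with h | h
    · exact h
    · exfalso
      apply hu0
      funext s
      have := (Finset.sum_eq_zero_iff_of_nonneg (fun s _ => hunn s)).mp h.symm
      exact this s (Finset.mem_univ s)
  refine ⟨fun s => u s / c, ⟨fun s => div_nonneg (hunn s) hcpos.le, ?_, fun s' => ?_⟩, ?_⟩
  · rw [← Finset.sum_div, ← hc, div_self hcpos.ne']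
  · rw [eq_comm]
    calc ∑ s, (u s / c) * P s s' = (∑ s, u s * P s s') / c := by
          rw [Finset.sum_div]
          exact Finset.sum_congr rfl fun s _ => div_mul_eq_mul_div _ _ _
      _ = u s' / c := by rw [← hustat s']
  -- uniqueness
  rintro e ⟨hen, hes, hestat⟩
  -- also the candidate d := u/c satisfies; show e = u/c by the sign lemma on the difference
  have hdn : ∀ s, 0 ≤ u s / c := fun s => div_nonneg (hunn s) hcpos.le
  have hds : ∑ s, u s / c = 1 := by rw [← Finset.sum_div, ← hc, div_self hcpos.ne']
  have hdstat : ∀ s', u s' / c = ∑ s, (u s / c) * P s s' := by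
    intro s'
    rw [eq_comm]
    calc ∑ s, (u s / c) * P s s' = (∑ s, u s * P s s') / c := by
          rw [Finset.sum_div]
          exact Finset.sum_congr rfl fun s _ => div_mul_eq_mul_div _ _ _
      _ = u s' / c := by rw [← hustat s']
  set v : S → ℝ := fun s => e s - u s / c with hv
  have hvstat : ∀ s', v s' = ∑ s, v s * P s s' := by
    intro s'
    simp only [hv, sub_mul, Finset.sum_sub_distrib]
    rw [← hestat s', ← hdstat s']
  have hvsum : ∑ s, v s = 0 := by
    simp only [hv, Finset.sum_sub_distrib, hes, hds, sub_self]
  have hvzero : ∀ s, v s = 0 := by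
    rcases sign_lemma P hpos hrow v hvstat with hnn | hnp
    · exact fun s =>
        (Finset.sum_eq_zero_iff_of_nonneg (fun s _ => hnn s)).mp hvsum s (Finset.mem_univ s)
    · intro s
      have h0 : ∑ s, (-(v s)) = 0 := by rw [Finset.sum_neg_distrib, hvsum, neg_zero]
      have := (Finset.sum_eq_zero_iff_of_nonneg
        (fun s _ => neg_nonneg.mpr (hnp s))).mp h0 s (Finset.mem_univ s)
      linarith
  funext s
  have := hvzero s
  simp only [hv] at this
  linarith
end

section
/- For the modified epoch-triggering rule where a new epoch starts when ν_e(s,a) ≥ N_e(s,a)/M for some (s,a), the total number of epochs E up to time T ≥ SA is bounded by E ≤ 1 + SA + SA·log_{1+1/M}(T/(SA)), which is at most 1 + SA + M·SA·log₂(T/(SA)). -/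
/-!
Let `K (s, a)` count the epochs other than the last in which `(s, a)` triggers; every such epoch
triggers some pair, so `E - 1 ≤ ∑ K`. Each trigger of a pair adds at least `1` to its count and
multiplies it by at least `b = 1 + 1/M`, so `K ≤ n` and `b ^ K ≤ max 1 (b * n)` for its final
count `n`, where `∑ n = T`. Put `μ = T / (SA)` and `L = log b`. If `L μ ≤ 1`, then
`∑ K ≤ T = SA μ ≤ SA (1 + log_b μ)`. Otherwise every `K` lies below the tangent line
`1 + log_b μ + (n - μ) / (L μ)` of `n ↦ 1 + log_b n` at `μ` (for `n = 0` because `1 - L ≤ log μ`),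
and these tangent values sum to `SA (1 + log_b μ)`. The second inequality is Bernoulli's
`(1 + 1/M) ^ M ≥ 2`.
-/

open Finset Real

section Counter

variable {N : ℕ → ℕ} {s : Finset ℕ} {n : ℕ}

theorem card_le_of_forall_add_one_le (hN : Monotone N) (hs : ∀ e ∈ s, N e + 1 ≤ N (e + 1))
    (hsn : ∀ e ∈ s, e < n) : #s ≤ N n := by
  induction s using Finset.induction_on_max generalizing n with
  | empty => exact Nat.zero_le _
  | insert a s hlt ih =>
    have ha : a < n := hsn a (mem_insert_self a s)
    calc #(insert a s) = #s + 1 := card_insert_of_notMem fun h => (hlt a h).false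
      _ ≤ N a + 1 := by
        gcongr
        exact ih (fun e he => hs e (mem_insert_of_mem he)) hlt
      _ ≤ N (a + 1) := hs a (mem_insert_self a s)
      _ ≤ N n := hN ha

theorem pow_card_le_max_one {b : ℝ} (hb : 0 ≤ b) (hN : Monotone N)
    (hs : ∀ e ∈ s, max 1 (b * N e) ≤ N (e + 1)) (hsn : ∀ e ∈ s, e < n) :
    b ^ #s ≤ max 1 (b * N n) := by
  induction s using Finset.induction_on_max generalizing n with
  | empty => simp
  | insert a s hlt ih =>
    have ha : a < n := hsn a (mem_insert_self a s)
    have hNa : b ^ #s ≤ N (a + 1) :=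
      (ih (fun e he => hs e (mem_insert_of_mem he)) hlt).trans (hs a (mem_insert_self a s))
    calc b ^ #(insert a s) = b * b ^ #s := by
          rw [card_insert_of_notMem fun h => (hlt a h).false, pow_succ']
      _ ≤ b * N n := by
        gcongr
        exact hNa.trans (by exact_mod_cast hN ha)
      _ ≤ max 1 (b * N n) := le_max_right _ _

end Counter

theorem exists_trigger_counts {ι : Type*} [Fintype ι] {M : ℝ} (hM : 0 < M) (N : ℕ → ι → ℕ)
    (hN : ∀ i, Monotone (N · i)) (E : ℕ)
    (htrig : ∀ e, e + 1 < E → ∃ i, (N e i : ℝ) + max 1 (N e i / M) ≤ N (e + 1) i) :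
    ∃ K : ι → ℕ, E - 1 ≤ ∑ i, K i ∧
      ∀ i, K i ≤ N E i ∧ (1 + 1 / M) ^ K i ≤ max 1 ((1 + 1 / M) * N E i) := by
  classical
  let triggers (i : ι) : Finset ℕ :=
    {e ∈ range (E - 1) | (N e i : ℝ) + max 1 (N e i / M) ≤ N (e + 1) i}
  have mem_triggers {i e} (he : e ∈ triggers i) :
      e < E ∧ (N e i : ℝ) + max 1 (N e i / M) ≤ N (e + 1) i := by
    simp only [triggers, mem_filter, mem_range] at he
    exact ⟨by omega, he.2⟩
  refine ⟨fun i => #(triggers i), ?_, fun i => ⟨?_, ?_⟩⟩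
  · calc E - 1 = #(range (E - 1)) := (card_range _).symm
      _ ≤ #(univ.biUnion triggers) := card_le_card fun e he => by
          obtain ⟨i, hi⟩ := htrig e (by rw [mem_range] at he; omega)
          simp only [triggers, mem_biUnion, mem_univ, mem_filter, true_and]
          exact ⟨i, he, hi⟩
      _ ≤ ∑ i, #(triggers i) := card_biUnion_le
  · refine card_le_of_forall_add_one_le (hN i) (fun e he => ?_) fun e he => (mem_triggers he).1
    have : (N e i : ℝ) + 1 ≤ N (e + 1) i := by
      linarith [le_max_left 1 ((N e i : ℝ) / M), (mem_triggers he).2]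
    exact_mod_cast this
  · refine pow_card_le_max_one (by positivity) (hN i) (fun e he => ?_)
      fun e he => (mem_triggers he).1
    refine le_trans ?_ (mem_triggers he).2
    have h0 : (0 : ℝ) ≤ N e i := Nat.cast_nonneg _
    refine max_le ?_ ?_
    · linarith [le_max_left 1 ((N e i : ℝ) / M)]
    · rw [add_mul, one_mul, one_div_mul_eq_div]
      linarith [le_max_right 1 ((N e i : ℝ) / M)]

section LogBounds

variable {b μ : ℝ}

theorem sub_one_mul_log_le_log (hμ : 1 ≤ μ) (h : log b * μ ≤ 1) : (μ - 1) * log b ≤ log μ := by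
  have hμ0 : 0 < μ := by linarith
  have hL : log b ≤ μ⁻¹ := by rwa [← one_div, le_div_iff₀ hμ0]
  calc (μ - 1) * log b ≤ (μ - 1) * μ⁻¹ := by gcongr
    _ = 1 - μ⁻¹ := by rw [sub_mul, mul_inv_cancel₀ hμ0.ne', one_mul]
    _ ≤ log μ := one_sub_inv_le_log_of_pos hμ0

theorem one_sub_log_le_log (hμ : 0 < μ) (h : 1 ≤ log b * μ) : 1 - log b ≤ log μ := by
  have : μ⁻¹ ≤ log b := by rw [inv_le_iff_one_le_mul₀' hμ]; linarith
  linarith [one_sub_inv_le_log_of_pos hμ]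

theorem natCast_mul_log_le (hb : 1 < b) (hμ : 0 < μ) (h : 1 - log b ≤ log μ) {k n : ℕ}
    (hkn : k ≤ n) (hpow : b ^ k ≤ max 1 (b * n)) :
    k * log b ≤ log b + log μ - 1 + n / μ := by
  rcases n.eq_zero_or_pos with rfl | hn
  · obtain rfl : k = 0 := by omega
    simp only [Nat.cast_zero, zero_mul, zero_div, add_zero]
    linarith
  have hn1 : (1 : ℝ) ≤ n := by exact_mod_cast hn
  have hn0 : (0 : ℝ) < n := by linarith
  rw [max_eq_right (by nlinarith)] at hpow
  have hlog : k * log b ≤ log b + log n := by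
    rw [← log_pow, ← log_mul (by positivity) hn0.ne']
    exact log_le_log (by positivity) hpow
  have htangent : log (n / μ) ≤ n / μ - 1 := log_le_sub_one_of_pos (by positivity)
  rw [log_div hn0.ne' hμ.ne'] at htangent
  linarith

theorem log_two_le_mul_log_one_add_inv {M : ℝ} (hM : 1 ≤ M) : log 2 ≤ M * log (1 + 1 / M) := by
  have hM0 : 0 < M := by linarith
  have hbern : 1 + M * (1 / M) ≤ (1 + 1 / M) ^ M :=
    one_add_mul_self_le_rpow_one_add (by linarith [one_div_pos.mpr hM0]) hM
  rw [mul_one_div_cancel hM0.ne', one_add_one_eq_two] at hbern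
  rw [← log_rpow (by positivity)]
  exact log_le_log two_pos hbern

theorem logb_one_add_inv_le_mul_logb_two {M x : ℝ} (hM : 1 ≤ M) (hx : 0 ≤ log x) :
    logb (1 + 1 / M) x ≤ M * logb 2 x := by
  have hL : 0 < log (1 + 1 / M) := log_pos (lt_add_of_pos_right 1 (by positivity))
  rw [logb, logb, div_le_iff₀ hL, mul_div_assoc', div_mul_eq_mul_div,
    le_div_iff₀ (log_pos one_lt_two), mul_assoc]
  linarith [mul_le_mul_of_nonneg_left (log_two_le_mul_log_one_add_inv hM) hx]

end LogBounds

theorem sum_le_card_mul_one_add_logb {ι : Type*} [Fintype ι] {b : ℝ} (hb : 1 < b) {k n : ι → ℕ}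
    (hkn : ∀ i, k i ≤ n i) (hpow : ∀ i, b ^ k i ≤ max 1 (b * n i))
    (hcard : Fintype.card ι ≤ ∑ i, n i) :
    ((∑ i, k i : ℕ) : ℝ) ≤ Fintype.card ι * (1 + logb b ((∑ i, n i : ℕ) / Fintype.card ι)) := by
  rcases isEmpty_or_nonempty ι with hι | hι
  · simp
  replace hcard : (Fintype.card ι : ℝ) ≤ (∑ i, n i : ℕ) := by exact_mod_cast hcard
  set c : ℝ := (Fintype.card ι : ℝ)
  set μ : ℝ := (∑ i, n i : ℕ) / c
  have hc : 0 < c := by positivity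
  have hμ : 1 ≤ μ := by rw [le_div_iff₀ hc, one_mul]; exact hcard
  have hsum : ((∑ i, n i : ℕ) : ℝ) = c * μ := (mul_div_cancel₀ _ hc.ne').symm
  have hL : 0 < log b := log_pos hb
  suffices h : ((∑ i, k i : ℕ) : ℝ) * log b ≤ c * (log b + log μ) by
    calc ((∑ i, k i : ℕ) : ℝ) ≤ c * (log b + log μ) / log b := (le_div_iff₀ hL).mpr h
      _ = c * (1 + logb b μ) := by rw [logb]; field_simp
  by_cases hLμ : log b * μ ≤ 1
  · calc ((∑ i, k i : ℕ) : ℝ) * log b ≤ ((∑ i, n i : ℕ) : ℝ) * log b := by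
          gcongr with i
          exact hkn i
      _ = c * (μ * log b) := by rw [hsum, mul_assoc]
      _ ≤ c * (log b + log μ) := by
          gcongr
          linarith [sub_one_mul_log_le_log hμ hLμ]
  · have h1 := one_sub_log_le_log (by linarith) (not_le.mp hLμ).le
    calc ((∑ i, k i : ℕ) : ℝ) * log b = ∑ i, (k i : ℝ) * log b := by push_cast; exact sum_mul ..
      _ ≤ ∑ i, (log b + log μ - 1 + n i / μ) :=
          sum_le_sum fun i _ => natCast_mul_log_le hb (by linarith) h1 (hkn i) (hpow i)
      _ = c * (log b + log μ) := by
          rw [sum_add_distrib, ← sum_div, ← Nat.cast_sum, hsum, sum_const, card_univ, nsmul_eq_mul]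
          field_simp
          ring

theorem stmt_5_general (S A T E : ℕ) (M : ℝ) (hM : 1 ≤ M)
    (hT : S * A ≤ T)
    (ν N : ℕ → Fin S → Fin A → ℕ)
    (hN : ∀ e s a, N e s a = ∑ e' ∈ Finset.range e, ν e' s a)
    (htot : ∑ e ∈ Finset.range E, ∑ s, ∑ a, ν e s a = T)
    (htrig : ∀ e, e + 1 < E → ∃ s a, max 1 ((N e s a : ℝ) / M) ≤ (ν e s a : ℝ)) :
    (E : ℝ) ≤ 1 + S * A + S * A * Real.logb (1 + 1 / M) ((T : ℝ) / (S * A)) ∧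
    1 + (S : ℝ) * A + S * A * Real.logb (1 + 1 / M) ((T : ℝ) / (S * A)) ≤
      1 + S * A + M * (S * A) * Real.logb 2 ((T : ℝ) / (S * A)) := by
  have hstep (e s a) : N (e + 1) s a = N e s a + ν e s a := by rw [hN, hN, sum_range_succ]
  obtain ⟨K, hE, hK⟩ :=
    exists_trigger_counts (by positivity) (fun e (p : Fin S × Fin A) => N e p.1 p.2)
    (fun p => monotone_nat_of_le_succ fun e => by simp only [hstep]; omega) E
    fun e he => by
      obtain ⟨s, a, h⟩ := htrig e he
      exact ⟨(s, a), by rw [hstep]; push_cast; linarith⟩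
  have hNE : ∑ p : Fin S × Fin A, N E p.1 p.2 = T := by
    simp only [hN, Fintype.sum_prod_type, ← htot]
    calc _ = ∑ s, ∑ e ∈ range E, ∑ a, ν e s a := sum_congr rfl fun s _ => sum_comm
      _ = _ := sum_comm
  have hcard : Fintype.card (Fin S × Fin A) = S * A := by simp
  have hsum := sum_le_card_mul_one_add_logb (lt_add_of_pos_right 1 (by positivity : 0 < 1 / M))
    (fun p => (hK p).1) (fun p => (hK p).2) (by rw [hcard, hNE]; exact hT)
  rw [hcard, hNE] at hsum
  have hlog : 0 ≤ log (T / (S * A)) := by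
    rcases Nat.eq_zero_or_pos (S * A) with h | h
    · -- `T / 0 = 0` and `log 0 = 0`
      simp [show (S : ℝ) * A = 0 by exact_mod_cast h]
    · exact log_nonneg (by rw [one_le_div (by exact_mod_cast h)]; exact_mod_cast hT)
  constructor
  · calc (E : ℝ) ≤ 1 + ((∑ p, K p : ℕ) : ℝ) := by exact_mod_cast (by omega : E ≤ 1 + ∑ p, K p)
      _ ≤ _ := by push_cast at hsum ⊢; linarith
  · have := mul_le_mul_of_nonneg_left (logb_one_add_inv_le_mul_logb_two hM hlog)
      (by positivity : (0 : ℝ) ≤ S * A)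
    linarith

/-- Modified epoch-triggering rule: a new epoch starts when `ν_e(s,a) ≥ max(1, N_e(s,a)/M)`
for some `(s,a)`. Then `E ≤ 1 + SA + SA·log_{1+1/M}(T/(SA)) ≤ 1 + SA + M·SA·log₂(T/(SA))`. -/
theorem stmt_5 (S A T E : ℕ) (M : ℝ) (hM : 1 ≤ M)
    (hS : 0 < S) (hA : 0 < A) (hT : S * A ≤ T)
    (ν N : ℕ → Fin S → Fin A → ℕ)
    (hN : ∀ e s a, N e s a = ∑ e' ∈ Finset.range e, ν e' s a)
    (htot : ∑ e ∈ Finset.range E, ∑ s, ∑ a, ν e s a = T)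
    (htrig : ∀ e, e + 1 < E → ∃ s a, max 1 ((N e s a : ℝ) / M) ≤ (ν e s a : ℝ)) :
    (E : ℝ) ≤ 1 + S * A + S * A * Real.logb (1 + 1 / M) ((T : ℝ) / (S * A)) ∧
    1 + (S : ℝ) * A + S * A * Real.logb (1 + 1 / M) ((T : ℝ) / (S * A)) ≤
      1 + S * A + M * (S * A) * Real.logb 2 ((T : ℝ) / (S * A)) :=
  stmt_5_general S A T E M hM hT ν N hN htot htrig
end

section
/- (Jaksch Lemma 19 type bound) Let z₁,…,z_n be nonnegative reals with z_k ≤ Z_k := max(1, ∑_{i<k} z_i) for each k, and suppose ∑_{i≤n} z_i ≥ 1. Then ∑_{k=1}^n z_k/√(Z_k) ≤ (√2 + 1)·√(Z_{n+1}), where Z_{n+1} = ∑_{i=1}^n z_i. -/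
private lemma key_14 (S w : ℝ) (hS : 1 ≤ S) (hw : 0 ≤ w) (hwS : w ≤ S) :
    w / Real.sqrt S ≤ (Real.sqrt 2 + 1) * (Real.sqrt (S + w) - Real.sqrt S) := by
  have hS0 : (0:ℝ) < S := by linarith
  have ha : 0 < Real.sqrt S := Real.sqrt_pos.mpr hS0
  have ha2 : Real.sqrt S ^ 2 = S := Real.sq_sqrt hS0.le
  have hb2 : Real.sqrt (S + w) ^ 2 = S + w := Real.sq_sqrt (by linarith)
  have hb : Real.sqrt S ≤ Real.sqrt (S + w) := Real.sqrt_le_sqrt (by linarith)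
  have hbu : Real.sqrt (S + w) ≤ Real.sqrt 2 * Real.sqrt S := by
    rw [← Real.sqrt_mul (by norm_num)]
    exact Real.sqrt_le_sqrt (by linarith)
  rw [div_le_iff₀ ha]
  nlinarith [mul_nonneg (sub_nonneg.mpr hb) ha.le,
    mul_nonneg (sub_nonneg.mpr hb) (sub_nonneg.mpr hbu)]

/-- Jaksch-type lemma: for nonnegative `z₁,…,z_n` with `z_k ≤ Z_k := max(1, ∑_{i<k} z_i)`
and total sum at least `1`, `∑_{k=1}^n z_k/√(Z_k) ≤ (√2 + 1)·√(∑_{i=1}^n z_i)`. -/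
theorem stmt_14 (n : ℕ) (z : ℕ → ℝ)
    (hz : ∀ k, 1 ≤ k → k ≤ n → 0 ≤ z k)
    (Z : ℕ → ℝ) (hZ : ∀ k, Z k = max 1 (∑ i ∈ Finset.Icc 1 (k - 1), z i))
    (hle : ∀ k, 1 ≤ k → k ≤ n → z k ≤ Z k)
    (hsum : 1 ≤ ∑ i ∈ Finset.Icc 1 n, z i) :
    ∑ k ∈ Finset.Icc 1 n, z k / Real.sqrt (Z k) ≤
      (Real.sqrt 2 + 1) * Real.sqrt (∑ i ∈ Finset.Icc 1 n, z i) := by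
  have sqrt2 : (0:ℝ) ≤ Real.sqrt 2 := Real.sqrt_nonneg 2
  have aux : ∀ m, m ≤ n →
      ∑ k ∈ Finset.Icc 1 m, z k / Real.sqrt (Z k) ≤
        (Real.sqrt 2 + 1) * (Real.sqrt (max 1 (∑ i ∈ Finset.Icc 1 m, z i)) - 1)
          + min 1 (∑ i ∈ Finset.Icc 1 m, z i) := by
    intro m
    induction m with
    | zero => simp
    | succ m ih =>
      intro hmn
      have hm : m ≤ n := Nat.le_of_succ_le hmn
      have prev := ih hm
      set S := ∑ i ∈ Finset.Icc 1 m, z i with hSdef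
      have hS0 : 0 ≤ S := Finset.sum_nonneg fun i hi => by
        simp only [Finset.mem_Icc] at hi
        exact hz i hi.1 (hi.2.trans hm)
      have hzz : 0 ≤ z (m + 1) := hz (m + 1) (Nat.le_add_left 1 m) hmn
      have hZm : Z (m + 1) = max 1 S := by
        rw [hZ]; simp [hSdef]
      have hzle : z (m + 1) ≤ max 1 S := by
        rw [← hZm]; exact hle (m + 1) (Nat.le_add_left 1 m) hmn
      rw [Finset.sum_Icc_succ_top (Nat.le_add_left 1 m),
          Finset.sum_Icc_succ_top (Nat.le_add_left 1 m), ← hSdef, hZm]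
      rcases le_or_gt 1 S with h1 | h1
      · -- S ≥ 1
        have hmax : max 1 S = S := max_eq_right h1
        have hmax' : max 1 (S + z (m + 1)) = S + z (m + 1) :=
          max_eq_right (by linarith)
        have hmin : min 1 S = 1 := min_eq_left h1
        have hmin' : min 1 (S + z (m + 1)) = 1 := min_eq_left (by linarith)
        rw [hmax, hmin] at prev
        rw [hmax, hmax', hmin']
        have := key_14 S (z (m + 1)) h1 hzz (hmax ▸ hzle)
        nlinarith
      · -- S < 1
        have hmax : max 1 S = 1 := max_eq_left h1.le
        have hmin : min 1 S = S := min_eq_right h1.le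
        rw [hmax, hmin, Real.sqrt_one] at prev
        have prev' : ∑ k ∈ Finset.Icc 1 m, z k / Real.sqrt (Z k) ≤ S := by linarith
        have hz1 : z (m + 1) ≤ 1 := by rw [hmax] at hzle; exact hzle
        rw [hmax, Real.sqrt_one, div_one]
        rcases le_or_gt (S + z (m + 1)) 1 with h2 | h2
        · have hmax' : max 1 (S + z (m + 1)) = 1 := max_eq_left h2
          have hmin' : min 1 (S + z (m + 1)) = S + z (m + 1) := min_eq_right h2
          rw [hmax', hmin', Real.sqrt_one]
          linarith
        · have hmax' : max 1 (S + z (m + 1)) = S + z (m + 1) :=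
            max_eq_right h2.le
          have hmin' : min 1 (S + z (m + 1)) = 1 := min_eq_left h2.le
          rw [hmax', hmin']
          set T := S + z (m + 1) with hT
          have hT1 : 1 ≤ T := h2.le
          have hT2 : T ≤ 2 := by linarith
          have ht1 : 1 ≤ Real.sqrt T := by
            rw [show (1:ℝ) = Real.sqrt 1 by simp]
            exact Real.sqrt_le_sqrt hT1
          have ht2 : Real.sqrt T ≤ Real.sqrt 2 := Real.sqrt_le_sqrt hT2
          have htsq : Real.sqrt T ^ 2 = T := Real.sq_sqrt (by linarith)
          nlinarith [mul_nonneg (sub_nonneg.mpr ht1) (sub_nonneg.mpr ht2)]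
  have h := aux n le_rfl
  have hmax : max 1 (∑ i ∈ Finset.Icc 1 n, z i) = ∑ i ∈ Finset.Icc 1 n, z i :=
    max_eq_right hsum
  have hmin : min 1 (∑ i ∈ Finset.Icc 1 n, z i) = 1 := min_eq_left hsum
  rw [hmax, hmin] at h
  nlinarith
end
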